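/- arXiv:2006.08354 — 2 statements merged into one kernel-verified Lean document; each statement's English description precedes it below -/
import Mathlib

section
/- Let H be a Hilbert C*-module over a C*-algebra A and let T, S ∈ End*_A(H) with R(S) closed. Then the following are equivalent: (i) R(T) ⊆ R(S); (ii) TT* ≤ λ²SS* for some λ ≥ 0; (iii) there exists Q ∈ End*_A(H) with T = SQ. -/
/-!
The adjointable operators on `E` form a C⋆-algebra. If `R(S)` is closed, the open mapping
theorem gives `‖y‖ ≤ K ‖S S* y‖` on `R(S)`, which forces a gap in the spectrum of `S S*` around
`0`. Functional calculus then produces `g` with `(S S*) g (S S*) = S S*`, and `W = S* g`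
satisfies `S W S = S` with `S W` self-adjoint: `S W` is the projection onto `R(S)`.
Now `R(T) ⊆ R(S)` iff `T = S W T`, which gives `Q = W T`; from `T = S Q` we get
`T T* = S Q Q* S* ≤ ‖Q‖² S S*`; and `T T* ≤ λ² S S*` makes `T*` vanish on `R(1 - S W) ⊆ ker S*`,
so that `T = S W T`.
-/

open CStarModule

/-- The class `CStarModule` as it stood in Mathlib of December 2024: a right Hilbert
`A`-module (action of `Aᵐᵒᵖ`), with inner product right `A`-linear in the second argument. -/
class CStarModuleOld (A E : Type*) [NonUnitalSemiring A] [StarRing A] [Module ℂ A]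
    [AddCommGroup E] [Module ℂ E] [PartialOrder A] [SMul Aᵐᵒᵖ E] [Norm A] [Norm E]
    extends Inner A E where
  inner_add_right {x} {y} {z} : inner x (y + z) = inner x y + inner x z
  inner_self_nonneg {x} : 0 ≤ inner x x
  inner_self {x} : inner x x = 0 ↔ x = 0
  inner_op_smul_right {a : A} {x y : E} : inner x (MulOpposite.op a • y) = inner x y * a
  inner_smul_right_complex {z : ℂ} {x} {y} : inner x (z • y) = z • inner x y
  star_inner x y : star (inner x y) = inner y x
  norm_eq_sqrt_norm_inner_self x : ‖x‖ = √‖inner x x‖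

open scoped InnerProductSpace

lemma ContinuousLinearMap.exists_preimage_norm_le_of_isClosed_range {𝕜 E F : Type*}
    [NontriviallyNormedField 𝕜] [NormedAddCommGroup E] [NormedSpace 𝕜 E] [CompleteSpace E]
    [NormedAddCommGroup F] [NormedSpace 𝕜 F] [CompleteSpace F]
    (f : E →L[𝕜] F) (hf : IsClosed (Set.range f)) :
    ∃ C > 0, ∀ y ∈ Set.range f, ∃ x, f x = y ∧ ‖x‖ ≤ C * ‖y‖ := by
  have : CompleteSpace f.range := hf.completeSpace_coe
  obtain ⟨C, hC, hpre⟩ := f.rangeRestrict.exists_preimage_norm_le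
    (LinearMap.surjective_rangeRestrict (f : E →ₗ[𝕜] F))
  refine ⟨C, hC, fun y hy => ?_⟩
  obtain ⟨x, hx, hxy⟩ := hpre ⟨y, hy⟩
  exact ⟨x, congrArg Subtype.val hx, hxy⟩

section CStarAlgebra

variable {B : Type*} [CStarAlgebra B]

lemma IsSelfAdjoint.eq_zero_or_one_le_mul_abs_of_norm_mul_le {b : B} (hb : IsSelfAdjoint b)
    {K : ℝ} (h : ∀ c : B, ‖b * c‖ ≤ K * ‖b * (b * c)‖) {μ : ℝ} (hμ : μ ∈ spectrum ℝ b) :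
    μ = 0 ∨ 1 ≤ 2 * K * |μ| := by
  refine or_iff_not_imp_left.2 fun hμ0 => ?_
  have hmul (f : ℝ → ℝ) (hf : Continuous f) : b * cfc f b = cfc (fun x => x * f x) b := by
    rw [cfc_mul (fun x => x) f b (continuousOn_id' _) hf.continuousOn, cfc_id' ℝ b]
  set k : ℝ → ℝ := fun x => μ / (μ ^ 2 + x ^ 2)
  have hk : Continuous k := continuous_const.div (by fun_prop) fun x => by positivity
  have hlow : 1 / 2 ≤ ‖b * cfc k b‖ := by
    rw [hmul k hk]
    convert norm_apply_le_norm_cfc (fun x => x * k x) b hμ (continuous_id'.mul hk).continuousOn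
      using 1
    have hμk : μ * k μ = 1 / 2 := by
      simp only [k]
      field_simp
      ring
    rw [hμk, Real.norm_of_nonneg (by norm_num)]
  have hup : ‖b * (b * cfc k b)‖ ≤ |μ| := by
    rw [hmul k hk, hmul (fun x => x * k x) (continuous_id'.mul hk)]
    refine norm_cfc_le (abs_nonneg μ) fun x _ => ?_
    have hx : x * (x * k x) = μ * (x ^ 2 / (μ ^ 2 + x ^ 2)) := by simp only [k]; ring
    rw [hx, Real.norm_eq_abs, abs_mul, abs_of_nonneg (a := x ^ 2 / _) (by positivity)]
    exact mul_le_of_le_one_right (abs_nonneg μ)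
      (div_le_one_of_le₀ (le_add_of_nonneg_left (sq_nonneg μ)) (by positivity))
  have hc := h (cfc k b)
  have hK : 0 ≤ K := by nlinarith [norm_nonneg (b * (b * cfc k b))]
  nlinarith [mul_le_mul_of_nonneg_left hup hK]

lemma IsSelfAdjoint.exists_mul_mul_eq_self_of_spectrum_gap {b : B} (hb : IsSelfAdjoint b) {C : ℝ}
    (hgap : ∀ μ ∈ spectrum ℝ b, μ = 0 ∨ 1 ≤ C * |μ|) :
    ∃ g, IsSelfAdjoint g ∧ Commute b g ∧ b * g * b = b := by
  -- `m x = x⁻¹` wherever `1 ≤ C * |x|`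
  set m : ℝ → ℝ := fun x => C ^ 2 * x / max (C ^ 2 * x ^ 2) 1
  have hm : Continuous m :=
    (by fun_prop : Continuous fun x => C ^ 2 * x).div (by fun_prop) fun x => by positivity
  refine ⟨cfc m b, cfc_predicate m b, ?_, ?_⟩
  · simpa only [cfc_id' ℝ b] using cfc_commute_cfc (fun x => x) m b
  · calc b * cfc m b * b = cfc (fun x => x * m x * x) b := by
          rw [cfc_mul _ (fun x => x) b, cfc_mul (fun x => x) m b, cfc_id' ℝ b]
      _ = cfc (fun x => x) b := cfc_congr fun x hx => by
          rcases hgap x hx with rfl | hx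
          · simp
          · have hCx : 1 ≤ C ^ 2 * x ^ 2 := by
              have : (C * |x|) ^ 2 = C ^ 2 * x ^ 2 := by rw [mul_pow, sq_abs]
              nlinarith
            have hC : C ≠ 0 := by rintro rfl; norm_num at hCx
            simp only [m, max_eq_left hCx]
            field_simp
      _ = b := cfc_id' ℝ b

lemma exists_isSelfAdjoint_mul_and_mul_mul_eq_self {s g : B} (hg : IsSelfAdjoint g)
    (hcomm : Commute (s * star s) g) (hsg : s * star s * g * (s * star s) = s * star s) :
    ∃ w, IsSelfAdjoint (s * w) ∧ s * w * s = s := by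
  refine ⟨star s * g, ?_, ?_⟩
  · rw [← mul_assoc]
    exact ((IsSelfAdjoint.mul_star_self s).commute_iff hg).1 hcomm
  · set u := 1 - s * star s * g
    have hu : u * (s * star s) = 0 := by rw [sub_mul, one_mul, hsg, sub_self]
    have hus : u * s = 0 := by
      rw [← CStarRing.mul_star_self_eq_zero_iff, star_mul, mul_assoc, ← mul_assoc s,
        ← mul_assoc, hu, zero_mul]
    rwa [sub_mul, one_mul, sub_eq_zero, eq_comm, mul_assoc s] at hus

end CStarAlgebra

namespace CStarModule

variable {A E : Type*} [CStarAlgebra A] [PartialOrder A] [SMul A E]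
  [NormedAddCommGroup E] [NormedSpace ℂ E] [CStarModule A E]

lemma ext_inner_left {x y : E} (h : ∀ z, ⟪z, x⟫_A = ⟪z, y⟫_A) : x = y := by
  rw [← sub_eq_zero, ← inner_self (A := A), inner_sub_right, h, sub_self]

variable (A) in
def IsAdjointPair (T T' : E →L[ℂ] E) : Prop := ∀ x y, ⟪T x, y⟫_A = ⟪x, T' y⟫_A

namespace IsAdjointPair

variable {T T' S S' : E →L[ℂ] E}

lemma symm (h : IsAdjointPair A T T') : IsAdjointPair A T' T := fun x y => by
  rw [← star_inner, ← h, star_inner]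

lemma right_unique {T'' : E →L[ℂ] E} (h : IsAdjointPair A T T') (h' : IsAdjointPair A T T'') :
    T' = T'' :=
  ContinuousLinearMap.ext fun y => ext_inner_left fun x => by rw [← h, h']

lemma one : IsAdjointPair A (1 : E →L[ℂ] E) 1 := fun _ _ => rfl

lemma mul (h : IsAdjointPair A T T') (h' : IsAdjointPair A S S') :
    IsAdjointPair A (T * S) (S' * T') := fun _ _ => (h _ _).trans (h' _ _)

lemma add (h : IsAdjointPair A T T') (h' : IsAdjointPair A S S') :
    IsAdjointPair A (T + S) (T' + S') := fun x y => by
  simp only [add_apply, inner_add_left, inner_add_right, h x y, h' x y]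

lemma smul (c : ℂ) (h : IsAdjointPair A T T') : IsAdjointPair A (c • T) (star c • T') :=
  fun x y => by simp only [smul_apply, inner_smul_left_complex, inner_smul_right_complex, h x y]

variable [StarOrderedRing A]

lemma norm_sq_apply_le (h : IsAdjointPair A T T') (y : E) : ‖T' y‖ ^ 2 ≤ ‖T (T' y)‖ * ‖y‖ := by
  rw [norm_sq_eq A, ← h]
  exact norm_inner_le E

end IsAdjointPair

variable (A E) in
def adjointable : Subalgebra ℂ (E →L[ℂ] E) where
  carrier := {T | ∃ T', IsAdjointPair A T T'}
  mul_mem' := fun ⟨_, h⟩ ⟨_, h'⟩ => ⟨_, h.mul h'⟩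
  add_mem' := fun ⟨_, h⟩ ⟨_, h'⟩ => ⟨_, h.add h'⟩
  algebraMap_mem' c := ⟨star c • 1, by
    simpa [Algebra.algebraMap_eq_smul_one] using IsAdjointPair.one.smul c⟩

noncomputable instance : Star (adjointable A E) where
  star a := ⟨a.2.choose, a, a.2.choose_spec.symm⟩

instance : CoeFun (adjointable A E) fun _ => E → E := ⟨fun a => (a : E →L[ℂ] E)⟩

lemma isAdjointPair_star (a : adjointable A E) :
    IsAdjointPair A (a : E →L[ℂ] E) (star a : adjointable A E) :=
  a.2.choose_spec

lemma star_eq_of_isAdjointPair {a b : adjointable A E}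
    (h : IsAdjointPair A (a : E →L[ℂ] E) b) : star a = b :=
  Subtype.ext ((isAdjointPair_star a).right_unique h)

lemma coe_star_mk {T T' : E →L[ℂ] E} (h : IsAdjointPair A T T') :
    ((star ⟨T, T', h⟩ : adjointable A E) : E →L[ℂ] E) = T' :=
  (isAdjointPair_star _).right_unique h

noncomputable instance : StarRing (adjointable A E) where
  star_involutive a := star_eq_of_isAdjointPair (isAdjointPair_star a).symm
  star_mul a b := star_eq_of_isAdjointPair ((isAdjointPair_star a).mul (isAdjointPair_star b))
  star_add a b := star_eq_of_isAdjointPair ((isAdjointPair_star a).add (isAdjointPair_star b))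

instance : StarModule ℂ (adjointable A E) where
  star_smul c a := star_eq_of_isAdjointPair ((isAdjointPair_star a).smul c)

lemma range_subset_range_iff_mul_eq {s w t : adjointable A E} (h : s * w * s = s) :
    Set.range t ⊆ Set.range s ↔ s * w * t = t := by
  refine ⟨fun hts => Subtype.ext <| ContinuousLinearMap.ext fun x => ?_, fun hst => ?_⟩
  · obtain ⟨v, hv⟩ := hts ⟨x, rfl⟩
    change (s * w : adjointable A E) (t x) = t x
    rw [← hv]
    exact congrArg (fun a : adjointable A E => a v) h
  · rintro _ ⟨x, rfl⟩
    exact ⟨(w * t) x, congrArg (fun a : adjointable A E => a x) hst⟩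

lemma inner_apply_star_apply (a : adjointable A E) (f : E) :
    ⟪f, a (star a f)⟫_A = ⟪star a f, star a f⟫_A :=
  ((isAdjointPair_star a).symm f _).symm

lemma mul_mul_eq_of_inner_le {s w t : adjointable A E} (hsw : IsSelfAdjoint (s * w))
    (h : s * w * s = s) {c : ℝ} (hc : ∀ f, ⟪f, t (star t f)⟫_A ≤ c • ⟪f, s (star s f)⟫_A) :
    s * w * t = t := by
  set u := 1 - s * w
  have hu : IsSelfAdjoint u := (IsSelfAdjoint.one _).sub hsw
  have hsu : star s * u = 0 := by
    rw [← hu.star_eq, ← star_mul, sub_mul, one_mul, h, sub_self, star_zero]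
  have htu : star t * u = 0 := Subtype.ext <| ContinuousLinearMap.ext fun f => by
    have hsuf : star s (u f) = 0 := congrArg (fun a : adjointable A E => a f) hsu
    have hle := hc (u f)
    rw [inner_apply_star_apply, inner_apply_star_apply, hsuf, inner_zero_left, smul_zero] at hle
    exact inner_self.mp (le_antisymm hle inner_self_nonneg)
  have hut : u * t = 0 := by rw [← hu.star_eq, ← star_star t, ← star_mul, htu, star_zero]
  rwa [sub_mul, one_mul, sub_eq_zero, eq_comm] at hut

variable [StarOrderedRing A]

lemma isClosed_setOf_isAdjointPair :
    IsClosed {p : (E →L[ℂ] E) × (E →L[ℂ] E) | IsAdjointPair A p.1 p.2} := by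
  simp only [IsAdjointPair, Set.ofPred_forall]
  exact isClosed_iInter fun x => isClosed_iInter fun y => isClosed_eq (by fun_prop) (by fun_prop)

instance : CStarRing (adjointable A E) where
  norm_mul_self_le a := by
    have hbound : ‖(a : E →L[ℂ] E)‖ ≤ √‖star a * a‖ := by
      refine ContinuousLinearMap.opNorm_le_bound _ (Real.sqrt_nonneg _) fun y => ?_
      rw [← Real.sqrt_sq (norm_nonneg y), ← Real.sqrt_mul (norm_nonneg (star a * a)),
        Real.le_sqrt (norm_nonneg _) (by positivity)]
      calc ‖a y‖ ^ 2 ≤ ‖(star a * a : adjointable A E) y‖ * ‖y‖ :=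
            (isAdjointPair_star a).symm.norm_sq_apply_le y
        _ ≤ ‖star a * a‖ * ‖y‖ * ‖y‖ := by gcongr; exact ContinuousLinearMap.le_opNorm _ _
        _ = ‖star a * a‖ * ‖y‖ ^ 2 := by ring
    calc ‖a‖ * ‖a‖ ≤ √‖star a * a‖ * √‖star a * a‖ := mul_self_le_mul_self (norm_nonneg _) hbound
      _ = ‖star a * a‖ := Real.mul_self_sqrt (norm_nonneg _)

variable [CompleteSpace E]

instance : CompleteSpace (adjointable A E) := by
  let f (a : adjointable A E) : (E →L[ℂ] E) × (E →L[ℂ] E) := (a, ↑(star a))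
  have hf : Isometry f := Isometry.of_dist_eq fun a b => by
    rw [Prod.dist_eq, ← Subtype.dist_eq, ← Subtype.dist_eq]
    exact max_eq_left (dist_star_star a b).le
  have hrange : Set.range f = {p | IsAdjointPair A p.1 p.2} := by
    ext p
    refine ⟨?_, fun hp => ⟨⟨p.1, p.2, hp⟩, Prod.ext rfl (coe_star_mk hp)⟩⟩
    rintro ⟨a, rfl⟩
    exact isAdjointPair_star a
  rw [completeSpace_iff_isComplete_range hf.isUniformInducing, hrange]
  exact isClosed_setOf_isAdjointPair.isComplete

noncomputable instance : CStarAlgebra (adjointable A E) where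

lemma inner_apply_self_le_norm_sq_smul (a : adjointable A E) (x : E) :
    ⟪a x, a x⟫_A ≤ ‖a‖ ^ 2 • ⟪x, x⟫_A := by
  let _ := CStarAlgebra.spectralOrder (adjointable A E)
  let _ := CStarAlgebra.spectralOrderedRing (adjointable A E)
  obtain ⟨d, hd⟩ := CStarAlgebra.nonneg_iff_eq_star_mul_self.mp
    (sub_nonneg.mpr (CStarAlgebra.star_mul_le_algebraMap_norm_sq (a := a)))
  rw [← sub_nonneg]
  calc 0 ≤ ⟪d x, d x⟫_A := inner_self_nonneg
    _ = ⟪x, (star d * d) x⟫_A := isAdjointPair_star d x (d x)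
    _ = ‖a‖ ^ 2 • ⟪x, x⟫_A - ⟪a x, a x⟫_A := by
      rw [← hd, isAdjointPair_star a x (a x)]
      simp [Algebra.algebraMap_eq_smul_one, inner_sub_right, inner_smul_right_real]

lemma inner_apply_star_apply_le_of_eq_mul {s q t : adjointable A E} (h : t = s * q) (f : E) :
    ⟪f, t (star t f)⟫_A ≤ ‖q‖ ^ 2 • ⟪f, s (star s f)⟫_A := by
  rw [inner_apply_star_apply, inner_apply_star_apply, h, star_mul, ← norm_star q]
  exact inner_apply_self_le_norm_sq_smul (star q) (star s f)

lemma IsAdjointPair.exists_norm_le_mul_norm_apply_apply {S S' : E →L[ℂ] E}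
    (hS : IsAdjointPair A S S') (hclosed : IsClosed (Set.range S)) :
    ∃ K > 0, ∀ y ∈ Set.range S, ‖y‖ ≤ K * ‖S (S' y)‖ := by
  obtain ⟨C, hC, hpre⟩ := S.exists_preimage_norm_le_of_isClosed_range hclosed
  refine ⟨C ^ 2, by positivity, fun y hy => ?_⟩
  obtain ⟨x, rfl, hx⟩ := hpre y hy
  have hCS : ‖S x‖ ^ 2 ≤ C * ‖S x‖ * ‖S' (S x)‖ := calc
    ‖S x‖ ^ 2 = ‖⟪x, S' (S x)⟫_A‖ := by rw [norm_sq_eq A, hS]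
    _ ≤ ‖x‖ * ‖S' (S x)‖ := norm_inner_le E
    _ ≤ C * ‖S x‖ * ‖S' (S x)‖ := by gcongr
  have hS' : ‖S x‖ ≤ C * ‖S' (S x)‖ := by
    nlinarith [mul_nonneg hC.le (norm_nonneg (S' (S x))), norm_nonneg (S x)]
  nlinarith [hS.norm_sq_apply_le (S x), mul_nonneg (sq_nonneg C) (norm_nonneg (S (S' (S x)))),
    norm_nonneg (S x), norm_nonneg (S' (S x))]

theorem exists_isSelfAdjoint_mul_and_mul_mul_eq_self_of_isClosed_range (s : adjointable A E)
    (hs : IsClosed (Set.range s)) : ∃ w, IsSelfAdjoint (s * w) ∧ s * w * s = s := by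
  obtain ⟨K, hK, hKs⟩ := (isAdjointPair_star s).exists_norm_le_mul_norm_apply_apply hs
  have hb (c : adjointable A E) : ‖s * star s * c‖ ≤ K * ‖s * star s * (s * star s * c)‖ :=
    ContinuousLinearMap.opNorm_le_bound _ (by positivity) fun x => calc
      ‖(s * star s * c) x‖ ≤ K * ‖(s * star s * (s * star s * c)) x‖ := hKs _ ⟨_, rfl⟩
      _ ≤ K * (‖s * star s * (s * star s * c)‖ * ‖x‖) := by
        gcongr
        exact ContinuousLinearMap.le_opNorm _ _
      _ = _ := (mul_assoc _ _ _).symm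
  have hb_sa := IsSelfAdjoint.mul_star_self s
  obtain ⟨g, hg, hcomm, hbgb⟩ := hb_sa.exists_mul_mul_eq_self_of_spectrum_gap fun μ hμ =>
    hb_sa.eq_zero_or_one_le_mul_abs_of_norm_mul_le hb hμ
  exact exists_isSelfAdjoint_mul_and_mul_mul_eq_self hg hcomm hbgb

theorem douglas_factorization {T T' S S' : E →L[ℂ] E} (hT : IsAdjointPair A T T')
    (hS : IsAdjointPair A S S') (hS_closed : IsClosed (Set.range S)) :
    ((Set.range T ⊆ Set.range S) ↔
      ∃ lam : ℝ, 0 ≤ lam ∧ ∀ f : E, ⟪f, T (T' f)⟫_A ≤ (lam ^ 2) • ⟪f, S (S' f)⟫_A) ∧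
    ((Set.range T ⊆ Set.range S) ↔
      ∃ Q Q' : E →L[ℂ] E, IsAdjointPair A Q Q' ∧ T = S.comp Q) := by
  obtain ⟨t, rfl, rfl⟩ : ∃ t : adjointable A E, ↑t = T ∧ ↑(star t) = T' :=
    ⟨⟨T, T', hT⟩, rfl, coe_star_mk hT⟩
  obtain ⟨s, rfl, rfl⟩ : ∃ s : adjointable A E, ↑s = S ∧ ↑(star s) = S' :=
    ⟨⟨S, S', hS⟩, rfl, coe_star_mk hS⟩
  obtain ⟨w, hsw, hsws⟩ :=
    exists_isSelfAdjoint_mul_and_mul_mul_eq_self_of_isClosed_range s hS_closed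
  have hfac := range_subset_range_iff_mul_eq (t := t) hsws
  have hq (h : Set.range t ⊆ Set.range s) : t = s * (w * t) := by rw [← mul_assoc, hfac.1 h]
  refine ⟨⟨fun h => ⟨‖w * t‖, norm_nonneg _, inner_apply_star_apply_le_of_eq_mul (hq h)⟩,
    fun ⟨_, _, hle⟩ => hfac.2 (mul_mul_eq_of_inner_le hsw hsws hle)⟩,
    ⟨fun h => ⟨_, _, isAdjointPair_star (w * t), congrArg Subtype.val (hq h)⟩, ?_⟩⟩
  rintro ⟨Q, -, -, hQ⟩
  rw [hQ, ContinuousLinearMap.coe_comp]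
  exact Set.range_comp_subset_range _ _

end CStarModule

namespace CStarModuleOld

variable {A E : Type*} [CStarAlgebra A] [PartialOrder A]
  [NormedAddCommGroup E] [NormedSpace ℂ E] [SMul Aᵐᵒᵖ E] [CStarModuleOld A E]

/-- Mathlib's `CStarModule` is a left module with `⟪x, a • y⟫ = a * ⟪x, y⟫`; a right Hilbert
`A`-module is such a module over `Aᵐᵒᵖ`. -/
instance toCStarModuleMulOpposite : CStarModule Aᵐᵒᵖ E where
  inner x y := MulOpposite.op (inner A x y)
  inner_add_right := congrArg MulOpposite.op CStarModuleOld.inner_add_right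
  inner_self_nonneg := CStarModuleOld.inner_self_nonneg
  inner_self := MulOpposite.op_eq_zero_iff _ |>.trans CStarModuleOld.inner_self
  inner_op_smul_right := congrArg MulOpposite.op CStarModuleOld.inner_op_smul_right
  inner_smul_right_complex := congrArg MulOpposite.op CStarModuleOld.inner_smul_right_complex
  star_inner x y := congrArg MulOpposite.op (CStarModuleOld.star_inner x y)
  norm_eq_sqrt_norm_inner_self x := by
    rw [MulOpposite.norm_op, CStarModuleOld.norm_eq_sqrt_norm_inner_self (A := A) x]

lemma inner_mulOpposite (x y : E) : ⟪x, y⟫_Aᵐᵒᵖ = MulOpposite.op ⟪x, y⟫_A := rfl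

lemma isAdjointPair_mulOpposite_iff {T T' : E →L[ℂ] E} :
    IsAdjointPair Aᵐᵒᵖ T T' ↔ ∀ x y, ⟪T x, y⟫_A = ⟪x, T' y⟫_A := by
  simp only [IsAdjointPair, inner_mulOpposite, MulOpposite.op_inj]

end CStarModuleOld

/-- **Douglas factorization in Hilbert C⋆-modules.** For adjointable
`T, S ∈ End*_A(H)` with `R(S)` closed, the following are equivalent:
(i) `R(T) ⊆ R(S)`; (ii) `T T* ≤ λ² S S*` for some `λ ≥ 0`; (iii) `T = S Q` for some
adjointable `Q`. -/
theorem stmt16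
    {A : Type*} [CStarAlgebra A] [PartialOrder A] [StarOrderedRing A]
    {H : Type*} [NormedAddCommGroup H] [NormedSpace ℂ H] [SMul Aᵐᵒᵖ H]
    [CStarModuleOld A H] [CompleteSpace H]
    (T Ts S Ss : H →L[ℂ] H)
    (hT : ∀ x y : H, inner (𝕜 := A) (T x) y = inner (𝕜 := A) x (Ts y))
    (hS : ∀ x y : H, inner (𝕜 := A) (S x) y = inner (𝕜 := A) x (Ss y))
    (hclosed : IsClosed (Set.range S)) :
    ((Set.range T ⊆ Set.range S) ↔
      ∃ lam : ℝ, 0 ≤ lam ∧ ∀ f : H,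
        inner (𝕜 := A) f (T (Ts f)) ≤ (lam ^ 2) • inner (𝕜 := A) f (S (Ss f))) ∧
    ((Set.range T ⊆ Set.range S) ↔
      ∃ Q Qs : H →L[ℂ] H,
        (∀ x y : H, inner (𝕜 := A) (Q x) y = inner (𝕜 := A) x (Qs y)) ∧
        T = S.comp Q) := by
  open CStarModuleOld in
  simpa only [isAdjointPair_mulOpposite_iff, inner_mulOpposite, ← MulOpposite.op_smul,
    MulOpposite.op_le_op] using
    douglas_factorization (isAdjointPair_mulOpposite_iff.2 hT) (isAdjointPair_mulOpposite_iff.2 hS)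
      hclosed
end

section
/- Let H be a Hilbert C*-module over a unital C*-algebra A. For a bounded A-linear map T : H → H, there exists k ≥ 0 such that ⟨Tx,Tx⟩ ≤ k⟨x,x⟩ for all x ∈ H; conversely, any A-linear map satisfying such an inequality is bounded with ‖T‖² ≤ k. -/
/-! For `b = ⟪x, x⟫ + ε` (strictly positive) write `x = y <• b^{1/2}` with `y = x <• b^{-1/2}`.
Then `⟪y, y⟫ = b^{-1/2} ⟪x, x⟫ b^{-1/2} ≤ 1`, so `‖T y‖ ≤ ‖T‖`, and `A`-linearity gives
`⟪T x, T x⟫ = b^{1/2} ⟪T y, T y⟫ b^{1/2} ≤ ‖T‖² b`; letting `ε → 0` yields the constant `‖T‖²`.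
The converse is monotonicity of the norm on the positive cone, as `‖x‖² = ‖⟪x, x⟫‖`. -/

open CStarModule
open scoped RightActions

/-- The Hilbert C⋆-module class as it stood in the older Mathlib: a *right* `A`-module
(action `x <• a`) with an `A`-valued inner product linear in the second argument,
`⟪x, y <• a⟫ = ⟪x, y⟫ * a`. (Mathlib's `CStarModule` is now a left-module class.) -/
class CStarModuleRight (A E : Type*) [NonUnitalSemiring A] [StarRing A]
    [Module ℂ A] [AddCommGroup E] [Module ℂ E] [PartialOrder A] [SMul Aᵐᵒᵖ E] [Norm A] [Norm E]
    extends Inner A E where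
  inner_add_right {x} {y} {z} : inner x (y + z) = inner x y + inner x z
  inner_self_nonneg {x} : 0 ≤ inner x x
  inner_self {x} : inner x x = 0 ↔ x = 0
  inner_op_smul_right {a : A} {x y : E} : inner x (y <• a) = inner x y * a
  inner_smul_right_complex {z : ℂ} {x} {y} : inner x (z • y) = z • inner x y
  star_inner x y : star (inner x y) = inner y x
  norm_eq_sqrt_norm_inner_self x : ‖x‖ = √‖inner x x‖

theorem le_of_forall_pos_le_add_smul {M : Type*} [AddCommMonoid M] [PartialOrder M]
    [TopologicalSpace M] [OrderClosedTopology M] [ContinuousAdd M] [Module ℝ M]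
    [ContinuousSMul ℝ M] {a b : M} (u : M) (h : ∀ ε : ℝ, 0 < ε → b ≤ a + ε • u) : b ≤ a := by
  have hlim : Filter.Tendsto (fun ε : ℝ => a + ε • u) (nhdsWithin 0 (Set.Ioi 0)) (nhds a) := by
    have : Continuous fun ε : ℝ => a + ε • u := by fun_prop
    simpa using (this.tendsto 0).mono_left nhdsWithin_le_nhds
  exact ge_of_tendsto hlim (eventually_nhdsWithin_of_forall h)

namespace CStarModuleRight

section Algebraic

variable {A E : Type*} [NonUnitalRing A] [StarRing A] [Module ℂ A] [PartialOrder A] [Norm A]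
  [AddCommGroup E] [Module ℂ E] [SMul Aᵐᵒᵖ E] [Norm E] [CStarModuleRight A E]

theorem inner_sub_right (x y z : E) : inner A x (y - z) = inner A x y - inner A x z :=
  map_sub (AddMonoidHom.mk' (inner A x) fun _ _ => inner_add_right) y z

theorem inner_op_smul_left (a : A) (x y : E) : inner A (x <• a) y = star a * inner A x y := by
  rw [← star_inner y, inner_op_smul_right, star_mul, star_inner]

theorem isSelfAdjoint_inner_self (x : E) : IsSelfAdjoint (inner A x x) :=
  star_inner x x

theorem ext_inner_right {u v : E} (h : ∀ z : E, inner A z u = inner A z v) : u = v := by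
  have huv := h (u - v)
  rwa [← sub_eq_zero, ← inner_sub_right, inner_self, sub_eq_zero] at huv

theorem op_smul_op_smul (x : E) (a b : A) : x <• a <• b = x <• (a * b) :=
  ext_inner_right (A := A) fun z => by simp only [inner_op_smul_right, mul_assoc]

end Algebraic

variable {A E : Type*} [CStarAlgebra A] [PartialOrder A]
  [NormedAddCommGroup E] [NormedSpace ℂ E] [SMul Aᵐᵒᵖ E] [CStarModuleRight A E]

theorem op_smul_one (x : E) : x <• (1 : A) = x :=
  ext_inner_right (A := A) fun z => by rw [inner_op_smul_right, mul_one]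

theorem norm_sq_eq_norm_inner_self (x : E) : ‖x‖ ^ 2 = ‖inner A x x‖ := by
  rw [norm_eq_sqrt_norm_inner_self (A := A) x, Real.sq_sqrt (norm_nonneg _)]

variable [StarOrderedRing A]

theorem inner_self_le_norm_sq_smul_one (x : E) : inner A x x ≤ ‖x‖ ^ 2 • (1 : A) := by
  rw [norm_sq_eq_norm_inner_self (A := A), ← Algebra.algebraMap_eq_smul_one]
  exact (isSelfAdjoint_inner_self x).le_algebraMap_norm_self

theorem norm_le_one_of_inner_self_le_one {x : E} (hx : inner A x x ≤ 1) : ‖x‖ ≤ 1 := by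
  rw [← sq_le_one_iff₀ (norm_nonneg x), norm_sq_eq_norm_inner_self (A := A)]
  exact (CStarAlgebra.norm_le_one_iff_of_nonneg _ inner_self_nonneg).mpr hx

theorem norm_sq_le_of_inner_self_le_smul {x y : E} {k : ℝ} (hk : 0 ≤ k)
    (h : inner A y y ≤ k • inner A x x) : ‖y‖ ^ 2 ≤ k * ‖x‖ ^ 2 := by
  rw [norm_sq_eq_norm_inner_self (A := A), norm_sq_eq_norm_inner_self (A := A),
    ← Real.norm_of_nonneg hk, ← norm_smul]
  exact CStarAlgebra.norm_le_norm_of_nonneg_of_le inner_self_nonneg h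

theorem inner_map_self_le_opNorm_sq_smul_of_le (T : E →L[ℂ] E)
    (hT : ∀ (a : A) (x : E), T (x <• a) = T x <• a) {x : E} {b : A} (hb : IsStrictlyPositive b)
    (hxb : inner A x x ≤ b) : inner A (T x) (T x) ≤ ‖T‖ ^ 2 • b := by
  have hc : IsSelfAdjoint (CFC.sqrt b) := .of_nonneg (CFC.sqrt_nonneg b)
  have hd : IsSelfAdjoint (b ^ (-(1 / 2) : ℝ)) := .of_nonneg CFC.rpow_nonneg
  have hx : x = x <• b ^ (-(1 / 2) : ℝ) <• CFC.sqrt b := by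
    rw [op_smul_op_smul, CFC.sqrt_eq_rpow, CFC.rpow_neg_mul_rpow, op_smul_one]
  set y := x <• b ^ (-(1 / 2) : ℝ)
  have hy : ‖y‖ ≤ 1 := by
    refine norm_le_one_of_inner_self_le_one (A := A) ?_
    rw [inner_op_smul_left, inner_op_smul_right, hd.star_eq, ← mul_assoc,
      ← CFC.conjugate_rpow_neg_one_half b]
    exact hd.conjugate_le_conjugate hxb
  have hTy : ‖T y‖ ^ 2 ≤ ‖T‖ ^ 2 := by
    gcongr
    simpa using T.le_opNorm y |>.trans (mul_le_of_le_one_right (norm_nonneg T) hy)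
  calc inner A (T x) (T x)
      = CFC.sqrt b * inner A (T y) (T y) * CFC.sqrt b := by
        rw [hx, hT, inner_op_smul_left, inner_op_smul_right, hc.star_eq, mul_assoc]
    _ ≤ CFC.sqrt b * (‖T y‖ ^ 2 • (1 : A)) * CFC.sqrt b :=
        hc.conjugate_le_conjugate (inner_self_le_norm_sq_smul_one _)
    _ = ‖T y‖ ^ 2 • b := by
        rw [mul_smul_comm, mul_one, smul_mul_assoc, CFC.sqrt_mul_sqrt_self b hb.nonneg]
    _ ≤ ‖T‖ ^ 2 • b := smul_le_smul_of_nonneg_right hTy hb.nonneg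

theorem inner_map_self_le_opNorm_sq_smul (T : E →L[ℂ] E)
    (hT : ∀ (a : A) (x : E), T (x <• a) = T x <• a) (x : E) :
    inner A (T x) (T x) ≤ ‖T‖ ^ 2 • inner A x x := by
  refine le_of_forall_pos_le_add_smul ((‖T‖ ^ 2) • (1 : A)) fun ε hε => ?_
  have hb : IsStrictlyPositive (inner A x x + algebraMap ℝ A ε) :=
    (isStrictlyPositive_algebraMap hε).nonneg_add inner_self_nonneg
  calc inner A (T x) (T x)
      ≤ ‖T‖ ^ 2 • (inner A x x + algebraMap ℝ A ε) :=
        inner_map_self_le_opNorm_sq_smul_of_le T hT hb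
          (le_add_of_nonneg_right (isStrictlyPositive_algebraMap hε).nonneg)
    _ = ‖T‖ ^ 2 • inner A x x + ε • ‖T‖ ^ 2 • (1 : A) := by
        rw [smul_add, Algebra.algebraMap_eq_smul_one, smul_comm]

end CStarModuleRight

theorem stmt17_general
    {A : Type*} [CStarAlgebra A] [PartialOrder A] [StarOrderedRing A]
    {H : Type*} [NormedAddCommGroup H] [NormedSpace ℂ H] [SMul Aᵐᵒᵖ H]
    [CStarModuleRight A H]
    -- a bounded `A`-linear map
    (T : H →L[ℂ] H) (hTmod : ∀ (a : A) (x : H), T (x <• a) = T x <• a)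
    -- a (not necessarily bounded) `A`-linear map satisfying the inequality with constant `k`
    (T' : H →ₗ[ℂ] H)
    (k : ℝ) (hk : 0 ≤ k)
    (hT' : ∀ x : H, inner (𝕜 := A) (T' x) (T' x) ≤ k • inner (𝕜 := A) x x) :
    (∃ k₀ : ℝ, 0 ≤ k₀ ∧ ∀ x : H,
        inner (𝕜 := A) (T x) (T x) ≤ k₀ • inner (𝕜 := A) x x) ∧
    (∀ x : H, ‖T' x‖ ^ 2 ≤ k * ‖x‖ ^ 2) :=
  ⟨⟨‖T‖ ^ 2, sq_nonneg _, CStarModuleRight.inner_map_self_le_opNorm_sq_smul T hTmod⟩,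
    fun x => CStarModuleRight.norm_sq_le_of_inner_self_le_smul hk (hT' x)⟩

/-- On a Hilbert C⋆-module `H` over a unital C⋆-algebra `A`: every bounded
`A`-linear map `T : H → H` satisfies `⟪T x, T x⟫ ≤ k ⟪x, x⟫` for some `k ≥ 0`; and conversely
any `A`-linear map satisfying such an inequality is bounded with `‖T‖² ≤ k`
(i.e. `‖T x‖² ≤ k ‖x‖²` for all `x`). -/
theorem stmt17
    {A : Type*} [CStarAlgebra A] [PartialOrder A] [StarOrderedRing A]
    {H : Type*} [NormedAddCommGroup H] [NormedSpace ℂ H] [SMul Aᵐᵒᵖ H]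
    [CStarModuleRight A H] [CompleteSpace H]
    -- a bounded `A`-linear map
    (T : H →L[ℂ] H) (hTmod : ∀ (a : A) (x : H), T (x <• a) = T x <• a)
    -- a (not necessarily bounded) `A`-linear map satisfying the inequality with constant `k`
    (T' : H →ₗ[ℂ] H) (hT'mod : ∀ (a : A) (x : H), T' (x <• a) = T' x <• a)
    (k : ℝ) (hk : 0 ≤ k)
    (hT' : ∀ x : H, inner (𝕜 := A) (T' x) (T' x) ≤ k • inner (𝕜 := A) x x) :
    (∃ k₀ : ℝ, 0 ≤ k₀ ∧ ∀ x : H,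
        inner (𝕜 := A) (T x) (T x) ≤ k₀ • inner (𝕜 := A) x x) ∧
    (∀ x : H, ‖T' x‖ ^ 2 ≤ k * ‖x‖ ^ 2) :=
  stmt17_general T hTmod T' k hk hT'
end
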